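/- arXiv:math/0112308 — 3 statements merged into one kernel-verified Lean document; each statement's English description precedes it below -/
import Mathlib

section
/- Let M be an m×n real matrix, and let d ∈ ℝ^m and e ∈ ℝ^n satisfy Σ_{k=1}^n |m_{ik}| ≤ d_i for every i and Σ_{i=1}^m |m_{ik}| ≤ e_k for every k. Then for all vectors x ∈ ℝ^m and y ∈ ℝ^n with nonnegative entries, |xᵀMy| ≤ sqrt( Σ_i d_i x_i² ) · sqrt( Σ_k e_k y_k² ). -/
/-!
Split each entry as `|x i * M i k * y k| = √(|M i k| x_i²) · √(|M i k| y_k²)` and apply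
Cauchy–Schwarz over all pairs `(i, k)`; summing `|M i k|` along rows and along columns then
turns the two factors into `Σ_i d_i x_i²` and `Σ_k e_k y_k²`.
-/

open Finset

theorem abs_mul_mul_eq_sqrt_mul_sqrt (a u v : ℝ) :
    |u * a * v| = √(|a| * u ^ 2) * √(|a| * v ^ 2) := by
  rw [Real.sqrt_mul (abs_nonneg a), Real.sqrt_mul (abs_nonneg a), Real.sqrt_sq_eq_abs,
    Real.sqrt_sq_eq_abs, abs_mul, abs_mul]
  linear_combination -|u| * |v| * Real.sq_sqrt (abs_nonneg a)

namespace Matrix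

variable {ι κ : Type*} [Fintype ι] [Fintype κ]

theorem sum_abs_mul_sq_le_of_row_sum_le (M : Matrix ι κ ℝ) {d : ι → ℝ}
    (hd : ∀ i, ∑ k, |M i k| ≤ d i) (x : ι → ℝ) :
    ∑ p : ι × κ, |M p.1 p.2| * x p.1 ^ 2 ≤ ∑ i, d i * x i ^ 2 := by
  rw [Fintype.sum_prod_type]
  gcongr with i
  simp only [← sum_mul]
  exact mul_le_mul_of_nonneg_right (hd i) (sq_nonneg _)

theorem sum_abs_mul_sq_le_of_col_sum_le (M : Matrix ι κ ℝ) {e : κ → ℝ}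
    (he : ∀ k, ∑ i, |M i k| ≤ e k) (y : κ → ℝ) :
    ∑ p : ι × κ, |M p.1 p.2| * y p.2 ^ 2 ≤ ∑ k, e k * y k ^ 2 := by
  rw [Fintype.sum_prod_type_right]
  gcongr with k
  simp only [← sum_mul]
  exact mul_le_mul_of_nonneg_right (he k) (sq_nonneg _)

end Matrix

theorem stmt2_general (m n : ℕ) (M : Matrix (Fin m) (Fin n) ℝ)
    (d : Fin m → ℝ) (e : Fin n → ℝ)
    (hd : ∀ i, ∑ k, |M i k| ≤ d i) (he : ∀ k, ∑ i, |M i k| ≤ e k)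
    (x : Fin m → ℝ) (y : Fin n → ℝ) :
    |∑ i, ∑ k, x i * M i k * y k| ≤
      Real.sqrt (∑ i, d i * x i ^ 2) * Real.sqrt (∑ k, e k * y k ^ 2) := by
  calc |∑ i, ∑ k, x i * M i k * y k|
      ≤ ∑ i, ∑ k, |x i * M i k * y k| :=
        (abs_sum_le_sum_abs _ _).trans (sum_le_sum fun i _ => abs_sum_le_sum_abs _ _)
    _ = ∑ p : Fin m × Fin n, √(|M p.1 p.2| * x p.1 ^ 2) * √(|M p.1 p.2| * y p.2 ^ 2) := by
        simp only [Fintype.sum_prod_type, abs_mul_mul_eq_sqrt_mul_sqrt]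
    _ ≤ √(∑ p : Fin m × Fin n, |M p.1 p.2| * x p.1 ^ 2) *
          √(∑ p : Fin m × Fin n, |M p.1 p.2| * y p.2 ^ 2) :=
        Real.sum_sqrt_mul_sqrt_le _ (fun _ => by positivity) (fun _ => by positivity)
    _ ≤ √(∑ i, d i * x i ^ 2) * √(∑ k, e k * y k ^ 2) := by
        gcongr
        · exact M.sum_abs_mul_sq_le_of_row_sum_le hd x
        · exact M.sum_abs_mul_sq_le_of_col_sum_le he y

/-- If the absolute row sums of an `m × n` real matrix `M` are
bounded by `d` and its absolute column sums are bounded by `e`, then for all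
nonnegative vectors `x ∈ ℝ^m`, `y ∈ ℝ^n`,
`|xᵀMy| ≤ sqrt (Σ_i d_i x_i²) * sqrt (Σ_k e_k y_k²)`. -/
theorem stmt2 (m n : ℕ) (M : Matrix (Fin m) (Fin n) ℝ)
    (d : Fin m → ℝ) (e : Fin n → ℝ)
    (hd : ∀ i, ∑ k, |M i k| ≤ d i) (he : ∀ k, ∑ i, |M i k| ≤ e k)
    (x : Fin m → ℝ) (y : Fin n → ℝ)
    (hx : ∀ i, 0 ≤ x i) (hy : ∀ k, 0 ≤ y k) :
    |∑ i, ∑ k, x i * M i k * y k| ≤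
      Real.sqrt (∑ i, d i * x i ^ 2) * Real.sqrt (∑ k, e k * y k ^ 2) :=
  stmt2_general m n M d e hd he x y
end

section
/- Let X = (V, W, b, k) be a labelled graph and let (a, γ) be a solution of the BKN-equation over X with a not identically zero, a_v ≥ 0 for all v ∈ V, |γ_w| ≤ 1 for all w ∈ W, and γ_w γ_{-w} ≠ -1 for all w ∈ W. Define γ' : W → ℚ by γ'_w = γ_w if a_{w⁻} · a_{w⁺} ≠ 0, and γ'_w = 0 if a_{w⁻} · a_{w⁺} = 0. Then (a, γ') is again a solution of the BKN-equation over X with a not identically zero, a_v ≥ 0 for all v, |γ'_w| ≤ 1 for all w, and γ'_w γ'_{-w} ≠ -1 for all w; moreover γ'_w = 0 whenever a_{w⁻} a_{w⁺} = 0. -/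
open Finset

section Masking

variable {V W : Type*} (neg : W → W) (ini : W → V) (a : V → ℚ)

def maskOnZeros (γ : W → ℚ) (w : W) : ℚ :=
  if a (ini w) * a (ini (neg w)) = 0 then 0 else γ w

variable {neg ini a}

theorem abs_maskOnZeros_le {γ : W → ℚ} {c : ℚ} (hγ : ∀ w, |γ w| ≤ c) (w : W) :
    |maskOnZeros neg ini a γ w| ≤ c := by
  unfold maskOnZeros
  split_ifs
  · simpa using (abs_nonneg _).trans (hγ w)
  · exact hγ w

theorem maskOnZeros_mul_maskOnZeros_neg (hinv : ∀ w, neg (neg w) = w) (γ : W → ℚ) (w : W) :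
    maskOnZeros neg ini a γ w * maskOnZeros neg ini a γ (neg w) =
      if a (ini w) * a (ini (neg w)) = 0 then 0 else γ w * γ (neg w) := by
  simp only [maskOnZeros, hinv, mul_comm (a (ini w))]
  split_ifs <;> simp

theorem maskOnZeros_mul_maskOnZeros_neg_ne (hinv : ∀ w, neg (neg w) = w) {γ : W → ℚ} {c : ℚ}
    (hc : c ≠ 0) (hγγ : ∀ w, γ w * γ (neg w) ≠ c) (w : W) :
    maskOnZeros neg ini a γ w * maskOnZeros neg ini a γ (neg w) ≠ c := by
  rw [maskOnZeros_mul_maskOnZeros_neg hinv]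
  split_ifs
  · exact hc.symm
  · exact hγγ w

end Masking

section BKN

variable {V W : Type*} [Fintype W] [DecidableEq V]
  (neg : W → W) (ini : W → V) (b : W → ℤ) (k a : V → ℚ)

def IsBKNSolution (γ : W → ℚ) : Prop :=
  ∀ v, ∑ w ∈ univ.filter (fun w => ini w = v), γ w * a (ini (neg w)) / (b w : ℚ) = k v * a v

variable {neg ini a}

/-- At a vertex where `a` vanishes both sides of the masked equation are `0`; elsewhere a masked
term carries the factor `a (w⁺) = 0` anyway. -/
theorem isBKNSolution_maskOnZeros {γ : W → ℚ} (hsol : IsBKNSolution neg ini b k a γ) :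
    IsBKNSolution neg ini b k a (maskOnZeros neg ini a γ) := by
  intro v
  by_cases hv : a v = 0
  · rw [hv, mul_zero]
    refine sum_eq_zero fun w hw => ?_
    simp [maskOnZeros, (mem_filter.mp hw).2, hv]
  · rw [← hsol v]
    refine sum_congr rfl fun w hw => ?_
    unfold maskOnZeros
    split_ifs with hzero
    · have : a (ini (neg w)) = 0 := by simpa [(mem_filter.mp hw).2, hv] using hzero
      simp [this]
    · rfl

end BKN

theorem stmt4_general {V W : Type*} [Fintype W] [DecidableEq V]
    (neg : W → W) (hinv : ∀ w, neg (neg w) = w)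
    (ini : W → V)
    (b : W → ℤ)
    (k : V → ℚ)
    (a : V → ℚ) (γ : W → ℚ)
    (hsol : ∀ v, ∑ w ∈ univ.filter (fun w => ini w = v),
        γ w * a (ini (neg w)) / (b w : ℚ) = k v * a v)
    (ha_ne : a ≠ 0) (ha_nn : ∀ v, 0 ≤ a v)
    (hγ : ∀ w, |γ w| ≤ 1) (hγγ : ∀ w, γ w * γ (neg w) ≠ -1) :
    let γ' : W → ℚ := fun w => if a (ini w) * a (ini (neg w)) = 0 then 0 else γ w
    (∀ v, ∑ w ∈ univ.filter (fun w => ini w = v),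
        γ' w * a (ini (neg w)) / (b w : ℚ) = k v * a v) ∧
      a ≠ 0 ∧ (∀ v, 0 ≤ a v) ∧
      (∀ w, |γ' w| ≤ 1) ∧ (∀ w, γ' w * γ' (neg w) ≠ -1) ∧
      (∀ w, a (ini w) * a (ini (neg w)) = 0 → γ' w = 0) :=
  ⟨isBKNSolution_maskOnZeros b k hsol, ha_ne, ha_nn, abs_maskOnZeros_le hγ,
    maskOnZeros_mul_maskOnZeros_neg_ne hinv (by norm_num) hγγ, fun _ h => if_pos h⟩

/-- Let `X = (V, W, b, k)` be a labelled graph (finite vertex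
set `V`, finite set `W` of edge-ends with a fixed-point-free involution `neg`,
initial-vertex map `ini` (the terminal vertex of `w` is `ini (neg w)`),
labels `b : W → ℤ∖{0}` with `b (neg w) = b w`, charges `k : V → ℚ`).
If `(a, γ)` is a solution of the BKN-equation
`Σ_{w ∈ ∂v} γ_w a_{w⁺} / b_w = k_v a_v` with `a ≢ 0`, `a ≥ 0`, `|γ| ≤ 1` and
`γ_w γ_{-w} ≠ -1`, then replacing `γ_w` by `0` whenever `a_{w⁻} a_{w⁺} = 0`
again yields such a solution, which moreover vanishes on those edge-ends. -/
theorem stmt4 {V W : Type*} [Fintype V] [Fintype W] [DecidableEq V]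
    (neg : W → W) (hinv : ∀ w, neg (neg w) = w) (hfpf : ∀ w, neg w ≠ w)
    (ini : W → V)
    (b : W → ℤ) (hb : ∀ w, b w ≠ 0) (hbneg : ∀ w, b (neg w) = b w)
    (k : V → ℚ)
    (a : V → ℚ) (γ : W → ℚ)
    (hsol : ∀ v, ∑ w ∈ univ.filter (fun w => ini w = v),
        γ w * a (ini (neg w)) / (b w : ℚ) = k v * a v)
    (ha_ne : a ≠ 0) (ha_nn : ∀ v, 0 ≤ a v)
    (hγ : ∀ w, |γ w| ≤ 1) (hγγ : ∀ w, γ w * γ (neg w) ≠ -1) :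
    let γ' : W → ℚ := fun w => if a (ini w) * a (ini (neg w)) = 0 then 0 else γ w
    (∀ v, ∑ w ∈ univ.filter (fun w => ini w = v),
        γ' w * a (ini (neg w)) / (b w : ℚ) = k v * a v) ∧
      a ≠ 0 ∧ (∀ v, 0 ≤ a v) ∧
      (∀ w, |γ' w| ≤ 1) ∧ (∀ w, γ' w * γ' (neg w) ≠ -1) ∧
      (∀ w, a (ini w) * a (ini (neg w)) = 0 → γ' w = 0) :=
  stmt4_general neg hinv ini b k a γ hsol ha_ne ha_nn hγ hγγ
end

section
/- Let X = (V, W, b, k) be a labelled graph. The following are equivalent: (1) the BKN-equation over X has a solution (a, γ) with a_v > 0 for every v ∈ V and such that γ_w = γ_{-w} = ε_{w⁻} · ε_{w⁺} for all w ∈ W, for some function ε : V → {+1, -1}; (2) the reduced plumbing matrix A of X, defined as the V×V rational matrix whose v-row evaluated on a vector x gives k_v x_v − Σ_{w ∈ ∂v} x_{w⁺} / b_w (i.e. a_{vv'} = k_v·δ_{vv'} − Σ_{w ∈ ∂v, w⁺ = v'} 1/b_w), is supersingular, meaning that A x = 0 for some vector x : V → ℚ all of whose entries are nonzero. -/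
/-!
A solution of the BKN-equation with `γ_w = ε_{w⁻} ε_{w⁺}` is the same thing as a kernel vector
of the reduced plumbing matrix, up to the sign gauge `x = ε a`: on the edge-ends at `v` the factor
`ε_{w⁻} = ε_v` comes out of the sum, and `ε_{w⁺} a_{w⁺} = x_{w⁺}`. Conversely every vector with
nonzero entries factors as `x = sign x · |x|`.
-/

open Finset

section SignGauge

variable {V W K : Type*} [Fintype W] [DecidableEq V] [Field K]
  (neg : W → W) (ini : W → V) (b : W → K)

theorem sum_sign_twist (ε a : V → K) (v : V) :
    ∑ w ∈ univ.filter (fun w => ini w = v), ε (ini w) * ε (ini (neg w)) * a (ini (neg w)) / b w =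
      ε v * ∑ w ∈ univ.filter (fun w => ini w = v), ε (ini (neg w)) * a (ini (neg w)) / b w := by
  rw [mul_sum]
  refine sum_congr rfl fun w hw => ?_
  rw [(mem_filter.1 hw).2]
  ring

theorem bkn_eq_iff_plumbing_eq (k : V → K) {ε a x : V → K} {v : V} (hε : ε v * ε v = 1)
    (hxa : ∀ u, ε u * a u = x u) :
    ∑ w ∈ univ.filter (fun w => ini w = v),
        ε (ini w) * ε (ini (neg w)) * a (ini (neg w)) / b w = k v * a v ↔
      k v * x v - ∑ w ∈ univ.filter (fun w => ini w = v), x (ini (neg w)) / b w = 0 := by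
  rw [sum_sign_twist]
  simp only [hxa]
  rw [← hxa v]
  set S := ∑ w ∈ univ.filter (fun w => ini w = v), x (ini (neg w)) / b w
  constructor
  · intro h
    linear_combination (-ε v) * h + S * hε
  · intro h
    linear_combination (-ε v) * h + k v * a v * hε

end SignGauge

theorem sign_mul_sign_self {R : Type*} [Ring R] [LinearOrder R] [IsStrictOrderedRing R] {x : R}
    (hx : x ≠ 0) : (SignType.sign x : R) * SignType.sign x = 1 := by
  rcases hx.lt_or_gt with h | h <;> simp [sign_neg, sign_pos, h]

theorem stmt7_general {V W : Type*} [Fintype W] [DecidableEq V]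
    (neg : W → W) (hinv : ∀ w, neg (neg w) = w)
    (ini : W → V)
    (b : W → ℤ)
    (k : V → ℚ) :
    (∃ (a : V → ℚ) (γ : W → ℚ) (ε : V → ℚ),
        (∀ v, ∑ w ∈ univ.filter (fun w => ini w = v),
            γ w * a (ini (neg w)) / (b w : ℚ) = k v * a v) ∧
          (∀ v, 0 < a v) ∧
          (∀ v, ε v = 1 ∨ ε v = -1) ∧
          (∀ w, γ w = ε (ini w) * ε (ini (neg w))) ∧
          (∀ w, γ (neg w) = γ w)) ↔
      (∃ x : V → ℚ, (∀ v, x v ≠ 0) ∧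
        ∀ v, k v * x v - ∑ w ∈ univ.filter (fun w => ini w = v),
            x (ini (neg w)) / (b w : ℚ) = 0) := by
  constructor
  · rintro ⟨a, γ, ε, hbkn, hpos, hε, hγ, -⟩
    obtain rfl : γ = fun w => ε (ini w) * ε (ini (neg w)) := funext hγ
    have hε2 v : ε v * ε v = 1 := mul_self_eq_one_iff.2 (hε v)
    refine ⟨fun v => ε v * a v,
      fun v => mul_ne_zero (left_ne_zero_of_mul_eq_one (hε2 v)) (hpos v).ne', fun v => ?_⟩
    exact (bkn_eq_iff_plumbing_eq neg ini (fun w => (b w : ℚ)) k (hε2 v) fun _ => rfl).1 (hbkn v)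
  · rintro ⟨x, hx, hplumb⟩
    have hε2 v : (SignType.sign (x v) : ℚ) * SignType.sign (x v) = 1 := sign_mul_sign_self (hx v)
    refine ⟨fun v => |x v|, fun w => SignType.sign (x (ini w)) * SignType.sign (x (ini (neg w))),
      fun v => SignType.sign (x v), fun v => ?_, fun v => abs_pos.2 (hx v),
      fun v => mul_self_eq_one_iff.1 (hε2 v), fun w => rfl, fun w => by dsimp only; rw [hinv, mul_comm]⟩
    exact (bkn_eq_iff_plumbing_eq neg ini (fun w => (b w : ℚ)) k (hε2 v)
      fun u => sign_mul_abs (x u)).2 (hplumb v)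

/-- For a labelled graph `X = (V, W, b, k)`, the BKN-equation
has a solution `(a, γ)` with `a_v > 0` for all `v` and
`γ_w = γ_{-w} = ε_{w⁻} ε_{w⁺}` for some `ε : V → {±1}` if and only if the
reduced plumbing matrix (whose `v`-row applied to `x` gives
`k_v x_v − Σ_{w ∈ ∂v} x_{w⁺} / b_w`) is supersingular, i.e. kills some vector
`x : V → ℚ` all of whose entries are nonzero. -/
theorem stmt7 {V W : Type*} [Fintype V] [Fintype W] [DecidableEq V]
    (neg : W → W) (hinv : ∀ w, neg (neg w) = w) (hfpf : ∀ w, neg w ≠ w)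
    (ini : W → V)
    (b : W → ℤ) (hb : ∀ w, b w ≠ 0) (hbneg : ∀ w, b (neg w) = b w)
    (k : V → ℚ) :
    (∃ (a : V → ℚ) (γ : W → ℚ) (ε : V → ℚ),
        (∀ v, ∑ w ∈ univ.filter (fun w => ini w = v),
            γ w * a (ini (neg w)) / (b w : ℚ) = k v * a v) ∧
          (∀ v, 0 < a v) ∧
          (∀ v, ε v = 1 ∨ ε v = -1) ∧
          (∀ w, γ w = ε (ini w) * ε (ini (neg w))) ∧
          (∀ w, γ (neg w) = γ w)) ↔
      (∃ x : V → ℚ, (∀ v, x v ≠ 0) ∧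
        ∀ v, k v * x v - ∑ w ∈ univ.filter (fun w => ini w = v),
            x (ini (neg w)) / (b w : ℚ) = 0) :=
  stmt7_general neg hinv ini b k
end
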